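/- Let G be the wallpaper group p2 given by the presentation ⟨T₁, T₂, T₃ | T₁² = T₂² = T₃² = (T₁T₂T₃)² = 1⟩, with generating set S the images of T₁, T₂, T₃ (Cayley graph the hexagonal tiling 6³). Then the spherical growth function satisfies δ(0) = 1 and δ(n) = 3n for all n > 0. -/

import Mathlib

/-- Word length w.r.t. `S ∪ S⁻¹`. -/
noncomputable def wordLength {G : Type*} [Group G] (S : Set G) (g : G) : ℕ :=
  sInf {n | ∃ w : List G, (∀ x ∈ w, x ∈ S ∪ S⁻¹) ∧ w.length = n ∧ w.prod = g}

/-- The spherical growth function `δ(n) = #{g : |g| = n}`. -/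
noncomputable def sphericalGrowth {G : Type*} [Group G] (S : Set G) (n : ℕ) : ℕ :=
  Set.ncard {g : G | wordLength S g = n}

/-- The cumulative growth function `γ(n) = #{g : |g| ≤ n}`. -/
noncomputable def cumulativeGrowth {G : Type*} [Group G] (S : Set G) (n : ℕ) : ℕ :=
  Set.ncard {g : G | wordLength S g ≤ n}

/-- The relators of the wallpaper group `p2 = ⟨T₁,T₂,T₃ | T₁² = T₂² = T₃² = (T₁T₂T₃)² = 1⟩`. -/
def p2Rels : Set (FreeGroup (Fin 3)) :=
  {(FreeGroup.of 0) ^ 2, (FreeGroup.of 1) ^ 2, (FreeGroup.of 2) ^ 2,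
    (FreeGroup.of 0 * FreeGroup.of 1 * FreeGroup.of 2) ^ 2}

/-!
Realise `p2` as the group of isometries `v ↦ t + s • v` (`t ∈ ℤ²`, `s = ±1`) of `ℤ²`, the
generators acting as the point reflections in `(0, 0)`, `(1, 0)` and `(0, 1)`; the relations force
`T₂T₁` and `T₃T₁` to commute and to be inverted by `T₁`, which is what makes this an isomorphism.
In the model the word length has a closed form `P2Model.len`: it is recognised as the word length
because a generator changes it by at most one and, away from `1`, some generator decreases it.
An element of length `n` consists of the reflection part `(-1)ⁿ` and a lattice point on the boundary
of the hexagon `-⌊n/2⌋ ≤ x, y, x + y ≤ ⌈n/2⌉`, whose sides alternately have `⌈n/2⌉` and `⌊n/2⌋`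
lattice steps, so there are `3n` such elements for `n > 0`.
-/

open Finset

section WordLength

variable {G : Type*} [Group G] {S : Set G} (f : G → ℕ)

theorem apply_prod_le_length (h_one : f 1 = 0)
    (h_step : ∀ s ∈ S ∪ S⁻¹, ∀ g, f (s * g) ≤ f g + 1) {w : List G}
    (hw : ∀ x ∈ w, x ∈ S ∪ S⁻¹) : f w.prod ≤ w.length := by
  induction w with
  | nil => simp [h_one]
  | cons s w ih =>
    rw [List.prod_cons, List.length_cons]
    have hs := h_step s (hw s List.mem_cons_self) w.prod
    have := ih fun x hx => hw x (List.mem_cons_of_mem s hx)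
    omega

theorem exists_word_of_descent (h_eq_one : ∀ g, f g = 0 → g = 1)
    (h_desc : ∀ g, f g ≠ 0 → ∃ s ∈ S ∪ S⁻¹, f (s * g) + 1 = f g) (g : G) :
    ∃ w : List G, (∀ x ∈ w, x ∈ S ∪ S⁻¹) ∧ w.length = f g ∧ w.prod = g := by
  induction hn : f g generalizing g with
  | zero => exact ⟨[], by simp, rfl, (h_eq_one g hn).symm⟩
  | succ n ih =>
    obtain ⟨s, hs, hfs⟩ := h_desc g (by omega)
    obtain ⟨w, hw, hlen, hprod⟩ := ih (s * g) (by omega)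
    have hs_inv : s⁻¹ ∈ S ∪ S⁻¹ := by rwa [← Set.mem_inv, Set.union_inv, inv_inv, Set.union_comm]
    exact ⟨s⁻¹ :: w, List.forall_mem_cons.2 ⟨hs_inv, hw⟩, by simp [hlen], by simp [hprod]⟩

theorem wordLength_eq_of_descent (h_zero : ∀ g, f g = 0 ↔ g = 1)
    (h_step : ∀ s ∈ S ∪ S⁻¹, ∀ g, f (s * g) ≤ f g + 1)
    (h_desc : ∀ g, f g ≠ 0 → ∃ s ∈ S ∪ S⁻¹, f (s * g) + 1 = f g) :
    wordLength S = f := by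
  funext g
  obtain ⟨w, hw, hlen, hprod⟩ := exists_word_of_descent f (fun g => (h_zero g).1) h_desc g
  refine le_antisymm (Nat.sInf_le ⟨w, hw, hlen, hprod⟩) (le_csInf ⟨_, w, hw, hlen, hprod⟩ ?_)
  rintro n ⟨v, hv, rfl, rfl⟩
  exact apply_prod_le_length f ((h_zero 1).2 rfl) h_step hv

theorem sphericalGrowth_eq_ncard {H : Type*} [Group H] (e : G ≃* H) {f : H → ℕ}
    (h : wordLength S = f ∘ e) (n : ℕ) : sphericalGrowth S n = {m | f m = n}.ncard := by
  rw [sphericalGrowth, h]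
  exact Set.ncard_preimage_of_injective_subset_range (s := {m | f m = n}) e.injective
    (by simp [e.surjective.range_eq])

end WordLength

section HexagonalRing

noncomputable def hexRing (a b : ℕ) : Finset (ℤ × ℤ) :=
  {v ∈ Icc (-a : ℤ) b ×ˢ Icc (-a : ℤ) b | -a ≤ v.1 + v.2 ∧ v.1 + v.2 ≤ b ∧
    (v.1 = b ∨ v.2 = b ∨ v.1 + v.2 = b ∨ v.1 = -a ∨ v.2 = -a ∨ v.1 + v.2 = -a)}

lemma mem_hexRing {a b : ℕ} {v : ℤ × ℤ} :
    v ∈ hexRing a b ↔ -a ≤ v.1 ∧ v.1 ≤ b ∧ -a ≤ v.2 ∧ v.2 ≤ b ∧ -a ≤ v.1 + v.2 ∧ v.1 + v.2 ≤ b ∧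
      (v.1 = b ∨ v.2 = b ∨ v.1 + v.2 = b ∨ v.1 = -a ∨ v.2 = -a ∨ v.1 + v.2 = -a) := by
  simp only [hexRing, mem_filter, mem_product, mem_Icc, and_assoc]

-- The six sides of `hexRing a b` have `b, a, b, a, b, a` lattice steps, starting from `(b, 0)`.
def hexRingWalk (a b : ℤ) (t : ℕ) : ℤ × ℤ :=
  if t < b then (b - t, t)
  else if t < a + b then (b - t, b)
  else if t < a + 2 * b then (-a, a + 2 * b - t)
  else if t < 2 * a + 2 * b then (t - 2 * a - 2 * b, a + 2 * b - t)
  else if t < 2 * a + 3 * b then (t - 2 * a - 2 * b, -a)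
  else (b, t - 3 * a - 3 * b)

def hexRingPosition (a b : ℤ) (v : ℤ × ℤ) : ℕ := Int.toNat <|
  if 0 < v.1 ∧ v.1 + v.2 = b then v.2
  else if v.2 = b then b - v.1
  else if v.1 = -a then a + 2 * b - v.2
  else if v.1 < 0 ∨ v.2 = -a then v.1 + 2 * a + 2 * b
  else v.2 + 3 * a + 3 * b

theorem card_hexRing {a b : ℕ} (h : 0 < a + b) : (hexRing a b).card = 3 * (a + b) := by
  rw [← card_range (3 * (a + b))]
  refine card_nbij' (hexRingPosition a b) (hexRingWalk a b) ?_ ?_ ?_ ?_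
  · intro v hv
    rw [mem_coe, mem_hexRing] at hv
    rw [mem_coe, mem_range, hexRingPosition]
    split_ifs <;> omega
  · intro t ht
    rw [mem_coe, mem_range] at ht
    rw [mem_coe, mem_hexRing, hexRingWalk]
    split_ifs <;> dsimp only <;> omega
  · intro v hv
    rw [mem_coe, mem_hexRing] at hv
    unfold hexRingPosition hexRingWalk
    split_ifs <;> simp only [Prod.ext_iff] <;> omega
  · intro t ht
    rw [mem_coe, mem_range] at ht
    unfold hexRingWalk
    split_ifs <;> unfold hexRingPosition <;> split_ifs <;> omega

end HexagonalRing

/-- `⟨x, y, s⟩` is the isometry `v ↦ (x, y) + s • v` of `ℤ²`. -/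
@[ext]
structure P2Model where
  x : ℤ
  y : ℤ
  s : ℤˣ

namespace P2Model

instance : Mul P2Model := ⟨fun a b => ⟨a.x + a.s * b.x, a.y + a.s * b.y, a.s * b.s⟩⟩
instance : One P2Model := ⟨⟨0, 0, 1⟩⟩
instance : Inv P2Model := ⟨fun a => ⟨-(a.s * a.x), -(a.s * a.y), a.s⟩⟩

lemma mk_mul_mk (x y x' y' : ℤ) (s s' : ℤˣ) :
    (⟨x, y, s⟩ * ⟨x', y', s'⟩ : P2Model) = ⟨x + s * x', y + s * y', s * s'⟩ := rfl

@[simp] lemma mul_x (a b : P2Model) : (a * b).x = a.x + a.s * b.x := rfl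
@[simp] lemma mul_y (a b : P2Model) : (a * b).y = a.y + a.s * b.y := rfl
@[simp] lemma mul_s (a b : P2Model) : (a * b).s = a.s * b.s := rfl
@[simp] lemma one_x : (1 : P2Model).x = 0 := rfl
@[simp] lemma one_y : (1 : P2Model).y = 0 := rfl
@[simp] lemma one_s : (1 : P2Model).s = 1 := rfl
@[simp] lemma inv_x (a : P2Model) : a⁻¹.x = -(a.s * a.x) := rfl
@[simp] lemma inv_y (a : P2Model) : a⁻¹.y = -(a.s * a.y) := rfl
@[simp] lemma inv_s (a : P2Model) : a⁻¹.s = a.s := rfl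

lemma inv_mk (x y : ℤ) (s : ℤˣ) : (⟨x, y, s⟩ : P2Model)⁻¹ = ⟨-(s * x), -(s * y), s⟩ := rfl

instance : Group P2Model where
  mul_assoc a b c := by ext <;> simp only [mul_x, mul_y, mul_s, Units.val_mul] <;> ring
  one_mul a := by ext <;> simp
  mul_one a := by ext <;> simp
  inv_mul_cancel a := by rcases Int.units_eq_one_or a.s with h | h <;> ext <;> simp [h]

lemma mk_one_zpow (x y n : ℤ) : (⟨x, y, 1⟩ : P2Model) ^ n = ⟨n * x, n * y, 1⟩ := by
  induction n using Int.induction_on with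
  | zero => ext <;> simp
  | succ n ih =>
    rw [zpow_add_one, ih, mk_mul_mk]; ext <;> simp only [Units.val_one, one_mul] <;> ring
  | pred n ih =>
    rw [zpow_sub_one, ih, inv_mk, mk_mul_mk]; ext <;> simp only [Units.val_one, one_mul] <;> ring

def gen : Fin 3 → P2Model
  | 0 => ⟨0, 0, -1⟩
  | 1 => ⟨1, 0, -1⟩
  | 2 => ⟨0, 1, -1⟩

lemma gen_mul_self (i : Fin 3) : gen i * gen i = 1 := by
  fin_cases i <;> ext <;> simp [gen]

lemma gen_inv (i : Fin 3) : (gen i)⁻¹ = gen i :=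
  inv_eq_of_mul_eq_one_right (gen_mul_self i)

def len (m : P2Model) : ℕ :=
  let c : ℤ := if m.s = 1 then 0 else 1
  (max (2 * max (max m.x m.y) (m.x + m.y) - c) (c - 2 * min (min m.x m.y) (m.x + m.y))).toNat

lemma len_mk_one_le_iff (x y : ℤ) (n : ℕ) : len ⟨x, y, 1⟩ ≤ n ↔
    2 * x ≤ n ∧ 2 * y ≤ n ∧ 2 * (x + y) ≤ n ∧ -n ≤ 2 * x ∧ -n ≤ 2 * y ∧ -n ≤ 2 * (x + y) := by
  simp only [len, if_pos, Int.toNat_le, max_le_iff]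
  omega

lemma len_mk_neg_one_le_iff (x y : ℤ) (n : ℕ) : len ⟨x, y, -1⟩ ≤ n ↔
    2 * x ≤ n + 1 ∧ 2 * y ≤ n + 1 ∧ 2 * (x + y) ≤ n + 1 ∧
      1 - n ≤ 2 * x ∧ 1 - n ≤ 2 * y ∧ 1 - n ≤ 2 * (x + y) := by
  simp only [len, Int.toNat_le, max_le_iff, if_neg (show (-1 : ℤˣ) ≠ 1 by decide)]
  omega

lemma len_eq_zero_iff (m : P2Model) : len m = 0 ↔ m = 1 := by
  obtain ⟨x, y, s⟩ := m
  rw [← Nat.le_zero, P2Model.ext_iff]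
  rcases Int.units_eq_one_or s with rfl | rfl
  · rw [len_mk_one_le_iff]; simp only [one_x, one_y, one_s, and_true]; omega
  · rw [len_mk_neg_one_le_iff]; simp only [one_s, neg_units_ne_self, and_false, iff_false]; omega

lemma len_gen_mul_le (i : Fin 3) (m : P2Model) : len (gen i * m) ≤ len m + 1 := by
  obtain ⟨x, y, s⟩ := m
  have hm := le_refl (len ⟨x, y, s⟩)
  rcases Int.units_eq_one_or s with rfl | rfl <;> fin_cases i <;>
    simp only [gen, mk_mul_mk, len_mk_one_le_iff, len_mk_neg_one_le_iff, Units.val_neg,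
      Units.val_one, neg_mul, one_mul, neg_neg] at hm ⊢ <;> push_cast <;> omega

lemma exists_len_gen_mul (m : P2Model) (hm : len m ≠ 0) : ∃ i, len (gen i * m) + 1 = len m := by
  suffices ∃ i, len (gen i * m) + 1 ≤ len m by
    obtain ⟨i, hi⟩ := this
    refine ⟨i, le_antisymm hi ?_⟩
    simpa [← mul_assoc, gen_mul_self] using len_gen_mul_le i (gen i * m)
  obtain ⟨n, hn⟩ := Nat.exists_eq_succ_of_ne_zero hm
  obtain ⟨x, y, s⟩ := m
  have h_le : len ⟨x, y, s⟩ ≤ n + 1 := hn.le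
  have h_gt : ¬ len ⟨x, y, s⟩ ≤ n := by omega
  refine ⟨if 1 ≤ x then 1 else if 1 ≤ y then 2 else 0, ?_⟩
  rw [hn, Nat.succ_le_succ_iff]
  rcases Int.units_eq_one_or s with rfl | rfl <;> split_ifs <;>
    simp only [gen, mk_mul_mk, len_mk_one_le_iff, len_mk_neg_one_le_iff, Units.val_neg,
      Units.val_one, neg_mul, one_mul, neg_neg] at h_le h_gt ⊢ <;> push_cast at h_le ⊢ <;> omega

lemma len_eq_iff (x y : ℤ) (s : ℤˣ) (n : ℕ) :
    len ⟨x, y, s⟩ = n ↔ s = (-1) ^ n ∧ (x, y) ∈ hexRing (n / 2) ((n + 1) / 2) := by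
  have h : len ⟨x, y, s⟩ = n ↔ len ⟨x, y, s⟩ ≤ n ∧ (n = 0 ∨ ¬ len ⟨x, y, s⟩ ≤ n - 1) := by omega
  rw [h, mem_hexRing]
  have h_even (k : ℕ) : (-1 : ℤˣ) ^ (2 * k) = 1 := by rw [pow_mul, neg_one_sq, one_pow]
  have h_odd (k : ℕ) : (-1 : ℤˣ) ^ (2 * k + 1) = -1 := by rw [pow_succ, h_even, one_mul]
  have h_ne : (1 : ℤˣ) ≠ -1 := by decide
  rcases Nat.even_or_odd' n with ⟨k, rfl | rfl⟩ <;> rcases Int.units_eq_one_or s with rfl | rfl <;>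
    simp only [len_mk_one_le_iff, len_mk_neg_one_le_iff, h_even, h_odd, h_ne, h_ne.symm, true_and,
      false_and, iff_false] <;> omega

lemma ncard_sphere (n : ℕ) :
    {m : P2Model | len m = n}.ncard = (hexRing (n / 2) ((n + 1) / 2)).card := by
  have h : {m : P2Model | len m = n} =
      (fun v : ℤ × ℤ => (⟨v.1, v.2, (-1) ^ n⟩ : P2Model)) '' hexRing (n / 2) ((n + 1) / 2) := by
    ext ⟨x, y, s⟩
    rw [Set.mem_ofPred_eq, len_eq_iff]
    simp [and_comm, eq_comm]
  rw [h, Set.ncard_image_of_injective _ (fun v w h => by simpa [Prod.ext_iff] using h),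
    Set.ncard_coe_finset]

end P2Model

section Presentation

local notation "P₂" => PresentedGroup p2Rels

open PresentedGroup

lemma p2_of_mul_self (i : Fin 3) : of i * of i = (1 : P₂) := by
  have hi : FreeGroup.of i ^ 2 ∈ p2Rels := by fin_cases i <;> simp [p2Rels]
  have := one_of_mem hi
  rwa [map_pow, sq] at this

lemma p2_of_mul_of_mul (i : Fin 3) (g : P₂) : of i * (of i * g) = g := by
  rw [← mul_assoc, p2_of_mul_self, one_mul]

lemma p2_of_inv (i : Fin 3) : (of i)⁻¹ = (of i : P₂) :=
  inv_eq_of_mul_eq_one_right (p2_of_mul_self i)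

lemma p2_prod_of_eq_reverse : of 0 * of 1 * of 2 = (of 2 * of 1 * of 0 : P₂) := by
  have h : (FreeGroup.of 0 * FreeGroup.of 1 * FreeGroup.of 2) ^ 2 ∈ p2Rels := by simp [p2Rels]
  have h_sq : (of 0 * of 1 * of 2) * (of 0 * of 1 * of 2) = (1 : P₂) := by
    have := one_of_mem h
    rwa [map_pow, sq, map_mul, map_mul] at this
  rw [eq_inv_of_mul_eq_one_left h_sq]
  simp only [mul_inv_rev, p2_of_inv, mul_assoc]

lemma p2_commute_translations : Commute (of 1 * of 0 : P₂) (of 2 * of 0) :=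
  calc (of 1 * of 0 * (of 2 * of 0) : P₂)
      = of 2 * ((of 2 * of 1 * of 0) * (of 2 * of 0)) := by simp only [mul_assoc, p2_of_mul_of_mul]
    _ = of 2 * ((of 0 * of 1 * of 2) * (of 2 * of 0)) := by rw [p2_prod_of_eq_reverse]
    _ = of 2 * of 0 * (of 1 * of 0) := by simp only [mul_assoc, p2_of_mul_of_mul]

lemma p2_semiconjBy_of_zero (i : Fin 3) : SemiconjBy (of 0 : P₂) (of i * of 0) (of i * of 0)⁻¹ := by
  simp [SemiconjBy, mul_inv_rev, p2_of_inv, mul_assoc]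

def p2Transl (x y : ℤ) : P₂ := (of 1 * of 0) ^ x * (of 2 * of 0) ^ y

lemma p2Transl_mul (x y x' y' : ℤ) :
    p2Transl x y * p2Transl x' y' = p2Transl (x + x') (y + y') := by
  have h := (p2_commute_translations.zpow_zpow x' y).eq
  calc p2Transl x y * p2Transl x' y'
      = (of 1 * of 0) ^ x * ((of 1 * of 0) ^ x' * (of 2 * of 0) ^ y) * (of 2 * of 0) ^ y' := by
        simp only [p2Transl, mul_assoc, h]
    _ = p2Transl (x + x') (y + y') := by simp only [p2Transl, zpow_add, mul_assoc]

lemma p2_semiconjBy_transl (x y : ℤ) :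
    SemiconjBy (of 0 : P₂) (p2Transl x y) (p2Transl (-x) (-y)) := by
  have h :=
    ((p2_semiconjBy_of_zero 1).zpow_right x).mul_right ((p2_semiconjBy_of_zero 2).zpow_right y)
  simpa only [p2Transl, inv_zpow, zpow_neg] using h

def p2Refl (s : ℤˣ) : P₂ := if s = 1 then 1 else of 0

lemma p2Refl_mul (s t : ℤˣ) : p2Refl (s * t) = p2Refl s * p2Refl t := by
  rcases Int.units_eq_one_or s with rfl | rfl <;> rcases Int.units_eq_one_or t with rfl | rfl <;>
    simp [p2Refl, p2_of_mul_self]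

lemma p2Refl_mul_transl (s : ℤˣ) (x y : ℤ) :
    p2Refl s * p2Transl x y = p2Transl (s * x) (s * y) * p2Refl s := by
  rcases Int.units_eq_one_or s with rfl | rfl
  · simp [p2Refl]
  · simpa [p2Refl] using (p2_semiconjBy_transl x y).eq

def modelToP2 : P2Model →* P₂ where
  toFun m := p2Transl m.x m.y * p2Refl m.s
  map_one' := by simp [p2Transl, p2Refl]
  map_mul' m n := by
    simp only [P2Model.mul_x, P2Model.mul_y, P2Model.mul_s, p2Refl_mul, ← p2Transl_mul, mul_assoc,
      ← mul_assoc (p2Refl m.s), p2Refl_mul_transl]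

lemma lift_gen_of_mem_p2Rels : ∀ r ∈ p2Rels, FreeGroup.lift P2Model.gen r = 1 := by
  rintro r (rfl | rfl | rfl | rfl) <;> simp only [map_pow, map_mul, FreeGroup.lift_apply_of]
  · exact (sq _).trans (P2Model.gen_mul_self 0)
  · exact (sq _).trans (P2Model.gen_mul_self 1)
  · exact (sq _).trans (P2Model.gen_mul_self 2)
  · ext <;> simp [sq, P2Model.gen]

def p2ToModel : P₂ →* P2Model := toGroup lift_gen_of_mem_p2Rels

lemma p2ToModel_of (i : Fin 3) : p2ToModel (of i) = P2Model.gen i :=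
  toGroup.of lift_gen_of_mem_p2Rels

lemma p2ToModel_transl (x y : ℤ) : p2ToModel (p2Transl x y) = ⟨x, y, 1⟩ := by
  have h₁ : p2ToModel (of 1 * of 0) = ⟨1, 0, 1⟩ := by ext <;> simp [p2ToModel_of, P2Model.gen]
  have h₂ : p2ToModel (of 2 * of 0) = ⟨0, 1, 1⟩ := by ext <;> simp [p2ToModel_of, P2Model.gen]
  simp only [p2Transl, map_mul, map_zpow, h₁, h₂, P2Model.mk_one_zpow]
  ext <;> simp

def p2EquivModel : P₂ ≃* P2Model :=
  p2ToModel.toMulEquiv modelToP2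
    (by
      ext i
      fin_cases i <;>
        simp [p2ToModel, modelToP2, P2Model.gen, p2Transl, p2Refl, mul_assoc, p2_of_mul_self])
    (by
      ext ⟨x, y, s⟩ : 1
      rcases Int.units_eq_one_or s with rfl | rfl <;>
        simp [modelToP2, p2Refl, p2ToModel_transl, p2ToModel_of, P2Model.gen, P2Model.mk_mul_mk])

lemma p2EquivModel_of (i : Fin 3) : p2EquivModel (of i) = P2Model.gen i := p2ToModel_of i

lemma exists_p2EquivModel_eq_gen {s : P₂} (hs : s ∈ Set.range of ∪ (Set.range of)⁻¹) :
    ∃ i, p2EquivModel s = P2Model.gen i := by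
  rcases hs with ⟨i, rfl⟩ | ⟨i, hi⟩
  · exact ⟨i, p2EquivModel_of i⟩
  · refine ⟨i, ?_⟩
    rw [← inv_inv s, ← hi, map_inv, p2EquivModel_of, P2Model.gen_inv]

end Presentation

/-- Spherical growth of `p2` with generators `T₁,T₂,T₃` (Cayley graph: the hexagonal tiling
`6³`): `δ(0) = 1`, `δ(n) = 3n` for `n > 0`. -/
theorem sphericalGrowth_p2_hexagonal :
    sphericalGrowth (Set.range (PresentedGroup.of (rels := p2Rels))) 0 = 1 ∧
      ∀ n : ℕ, 0 < n →
        sphericalGrowth (Set.range (PresentedGroup.of (rels := p2Rels))) n = 3 * n := by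
  have h_len : wordLength (Set.range (PresentedGroup.of (rels := p2Rels))) =
      P2Model.len ∘ p2EquivModel := by
    refine wordLength_eq_of_descent _ (fun g => by simp [P2Model.len_eq_zero_iff]) ?_ ?_
    · intro s hs g
      obtain ⟨i, hi⟩ := exists_p2EquivModel_eq_gen hs
      simpa [hi] using P2Model.len_gen_mul_le i _
    · intro g hg
      obtain ⟨i, hi⟩ := P2Model.exists_len_gen_mul _ hg
      exact ⟨_, Or.inl ⟨i, rfl⟩, by simpa [p2EquivModel_of] using hi⟩
  have h_sphere := sphericalGrowth_eq_ncard p2EquivModel h_len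
  refine ⟨?_, fun n hn => ?_⟩
  · rw [h_sphere, Set.ncard_eq_one]
    exact ⟨1, Set.ext P2Model.len_eq_zero_iff⟩
  · rw [h_sphere, P2Model.ncard_sphere, card_hexRing (by omega)]
    omega
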